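/- Let τ : S_n(ℂ) → S_m(ℂ) be a quantum channel with Kraus operators A_1,…,A_l, A(τ) := ∑_{i=1}^l A_i A_i^*, and suppose λ_1(A(τ)) < 1. Let m′ ≥ 2 be the smallest positive integer with ∑_{i=1}^{m′} λ_i(A(τ)) ≥ 1 and set η := 1 − ∑_{i=1}^{m′−1} λ_i(A(τ)). Then the minimum output entropy satisfies H(τ) ≥ F(A(τ)) := −η log η − ∑_{i=1}^{m′−1} λ_i(A(τ)) log λ_i(A(τ)). Moreover F(A(τ)) ≥ −log λ_1(A(τ)). -/

import Mathlib

/-!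
For a density matrix `X`, the output `Y = τ(X)` satisfies `Y ≤ τ(1) = A(τ)`. By Ky Fan's maximum
principle (the sum of the `k` largest eigenvalues of a Hermitian `W` is the maximum of `tr (P W)`
over `0 ≤ P ≤ 1` with `tr P = k`) the partial sums of the decreasingly ordered spectrum of `Y` are
bounded by those of `A(τ)`, and also by `tr Y = 1`. Hence they are bounded by the partial sums of
`ν = (λ₁, …, λ_{m'-1}, η, 0, …)`, and since the two sequences have the same total mass, Schur
concavity of the entropy (the tangent-line inequality for `x log x` followed by Abel summation)
gives `H(Y) ≥ H(ν) = F(A(τ))`. Finally every entry of `ν` is at most `λ₁`, so `H(ν) ≥ -log λ₁`.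
-/

open scoped ComplexOrder
open Matrix Kronecker

/-- Frobenius norm of a complex matrix: `√(tr (X Xᴴ))`. -/
noncomputable def frobNorm {n m : Type*} [Fintype n] [Fintype m]
    (X : Matrix n m ℂ) : ℝ :=
  Real.sqrt ((X * Xᴴ).trace.re)

/-- Operator norm `σ₁(τ) = ‖τ‖` of a map between spaces of Hermitian matrices,
with respect to the Frobenius norm. -/
noncomputable def opNorm {n m : Type*} [Fintype n] [Fintype m]
    (τ : Matrix n n ℂ → Matrix m m ℂ) : ℝ :=
  sSup {c : ℝ | ∃ X : Matrix n n ℂ, X.IsHermitian ∧ frobNorm X ≤ 1 ∧ c = frobNorm (τ X)}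

/-- The second singular value of a map between spaces of Hermitian matrices, via the
Courant–Fischer min-max characterization: the infimum over nonzero Hermitian `U` of the
norm of `τ` restricted to the orthogonal complement of `U`. -/
noncomputable def sigma2 {n m : Type*} [Fintype n] [Fintype m]
    (τ : Matrix n n ℂ → Matrix m m ℂ) : ℝ :=
  sInf {c : ℝ | ∃ U : Matrix n n ℂ, U.IsHermitian ∧ U ≠ 0 ∧
    c = sSup {d : ℝ | ∃ X : Matrix n n ℂ, X.IsHermitian ∧ frobNorm X ≤ 1 ∧
      (U * X).trace.re = 0 ∧ d = frobNorm (τ X)}}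

/-- Largest eigenvalue `λ₁` of a Hermitian matrix (junk value `0` otherwise). -/
noncomputable def lambdaMax {n : Type*} [Fintype n] [DecidableEq n]
    (Y : Matrix n n ℂ) : ℝ :=
  if hY : Y.IsHermitian then ⨆ i, hY.eigenvalues i else 0

/-- von Neumann entropy `H(Y) = -∑ λᵢ log λᵢ` of a Hermitian matrix
(junk value `0` otherwise); note `Real.log 0 = 0`. -/
noncomputable def entropy {n : Type*} [Fintype n] [DecidableEq n]
    (Y : Matrix n n ℂ) : ℝ :=
  if hY : Y.IsHermitian then -∑ i, hY.eigenvalues i * Real.log (hY.eigenvalues i) else 0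

/-- Minimum output entropy of a channel: the infimum of `H(τ X)` over density matrices `X`. -/
noncomputable def minEntropy {n m : Type*} [Fintype n] [DecidableEq n] [Fintype m] [DecidableEq m]
    (τ : Matrix n n ℂ → Matrix m m ℂ) : ℝ :=
  sInf {h : ℝ | ∃ X : Matrix n n ℂ, X.PosSemidef ∧ X.trace = 1 ∧ h = entropy (τ X)}

/-- Eigenvalues of a Hermitian matrix arranged in decreasing order:
`eigsDesc Y 0 = λ₁ ≥ eigsDesc Y 1 = λ₂ ≥ …` (junk value `0` if not Hermitian). -/
noncomputable def eigsDesc {n : ℕ} (Y : Matrix (Fin n) (Fin n) ℂ) : Fin n → ℝ :=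
  if hY : Y.IsHermitian then fun i => hY.eigenvalues (Tuple.sort hY.eigenvalues i.rev)
  else fun _ => 0

/-- The sum `λ₁ + ⋯ + λ_k` of the `k` largest eigenvalues of a Hermitian matrix. -/
noncomputable def sumTopEigs {n : ℕ} (k : ℕ) (Y : Matrix (Fin n) (Fin n) ℂ) : ℝ :=
  ∑ i : Fin n, if (i : ℕ) < k then eigsDesc Y i else 0

open Finset

theorem mul_log_tangent_le {a b : ℝ} (ha : 0 < a) (hb : 0 ≤ b) :
    a * Real.log a + (Real.log a + 1) * (b - a) ≤ b * Real.log b := by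
  rcases hb.eq_or_lt with rfl | hb
  · nlinarith [Real.log_le_sub_one_of_pos ha]
  · have h := Real.log_le_sub_one_of_pos (div_pos ha hb)
    rw [Real.log_div ha.ne' hb.ne', le_sub_iff_add_le, le_div_iff₀ hb] at h
    nlinarith

theorem sum_range_mul_nonneg_of_antitone {N : ℕ} {g d : ℕ → ℝ}
    (hg : ∀ k, k + 1 < N → g (k + 1) ≤ g k)
    (hd : ∀ K ≤ N, 0 ≤ ∑ k ∈ range K, d k) (hdN : ∑ k ∈ range N, d k = 0) :
    0 ≤ ∑ k ∈ range N, g k * d k := by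
  have := sum_range_by_parts g d N
  simp only [smul_eq_mul, hdN, mul_zero, zero_sub] at this
  rw [this, neg_nonneg]
  refine sum_nonpos fun k hk => mul_nonpos_of_nonpos_of_nonneg ?_ (hd _ ?_) <;>
    simp only [mem_range] at hk
  · linarith [hg k (by omega)]
  · omega

theorem sum_range_mul_log_le_of_pos {N : ℕ} {μ ν : ℕ → ℝ} (hμ : ∀ k < N, 0 < μ k)
    (hμ_anti : ∀ k, k + 1 < N → μ (k + 1) ≤ μ k) (hν : ∀ k, 0 ≤ ν k)
    (hle : ∀ K ≤ N, ∑ k ∈ range K, μ k ≤ ∑ k ∈ range K, ν k)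
    (heq : ∑ k ∈ range N, μ k = ∑ k ∈ range N, ν k) :
    ∑ k ∈ range N, μ k * Real.log (μ k) ≤ ∑ k ∈ range N, ν k * Real.log (ν k) := by
  have habel : 0 ≤ ∑ k ∈ range N, Real.log (μ k) * (ν k - μ k) := by
    refine sum_range_mul_nonneg_of_antitone
      (fun k hk => Real.log_le_log (hμ _ hk) (hμ_anti k hk)) (fun K hK => ?_) ?_
    · simpa [sum_sub_distrib] using hle K hK
    · simp [sum_sub_distrib, heq]
  calc ∑ k ∈ range N, μ k * Real.log (μ k)
      ≤ ∑ k ∈ range N, (μ k * Real.log (μ k) + (Real.log (μ k) + 1) * (ν k - μ k)) := by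
        simp only [add_mul, one_mul, sum_add_distrib, sum_sub_distrib, heq]
        linarith
    _ ≤ ∑ k ∈ range N, ν k * Real.log (ν k) :=
        sum_le_sum fun k hk => mul_log_tangent_le (hμ k (mem_range.1 hk)) (hν k)

theorem sum_range_mul_log_le {N : ℕ} {μ ν : ℕ → ℝ} (hμ : Antitone μ) (hμ0 : ∀ k, 0 ≤ μ k)
    (hν : ∀ k, 0 ≤ ν k) (hle : ∀ K ≤ N, ∑ k ∈ range K, μ k ≤ ∑ k ∈ range K, ν k)
    (heq : ∑ k ∈ range N, μ k = ∑ k ∈ range N, ν k) :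
    ∑ k ∈ range N, μ k * Real.log (μ k) ≤ ∑ k ∈ range N, ν k * Real.log (ν k) := by
  classical
  -- `ν` vanishes wherever `μ` does, so both sums can be cut at the first zero `r` of `μ`.
  have hex : ∃ r, N ≤ r ∨ μ r = 0 := ⟨N, .inl le_rfl⟩
  set r := Nat.find hex
  have hrN : r ≤ N := Nat.find_min' hex (.inl le_rfl)
  have hpos : ∀ k < r, 0 < μ k := fun k hk =>
    (hμ0 k).lt_of_ne' fun h => Nat.find_min hex hk (.inr h)
  have hμ_zero : ∀ k ∈ range N, k ∉ range r → μ k = 0 := by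
    intro k hkN hkr
    simp only [mem_range, not_lt] at hkN hkr
    rcases Nat.find_spec hex with h | h
    · omega
    · exact le_antisymm (h ▸ hμ hkr) (hμ0 k)
  have hsub : range r ⊆ range N := range_subset_range.2 hrN
  have hμ_sum : ∑ k ∈ range r, μ k = ∑ k ∈ range N, μ k := sum_subset hsub hμ_zero
  have hν_sum : ∑ k ∈ range r, ν k = ∑ k ∈ range N, ν k :=
    le_antisymm (sum_le_sum_of_subset_of_nonneg hsub fun k _ _ => hν k)
      (heq ▸ hμ_sum ▸ hle r hrN)
  have hν_zero : ∀ k ∈ range N, k ∉ range r → ν k = 0 := by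
    intro k hkN hkr
    have h := (sum_sdiff hsub (f := ν)).trans hν_sum.symm
    rw [add_eq_right, sum_eq_zero_iff_of_nonneg fun j _ => hν j] at h
    exact h k (mem_sdiff.2 ⟨hkN, hkr⟩)
  rw [← sum_subset hsub fun k hkN hkr => by simp [hμ_zero k hkN hkr],
    ← sum_subset hsub fun k hkN hkr => by simp [hν_zero k hkN hkr]]
  exact sum_range_mul_log_le_of_pos hpos (fun k hk => hμ (Nat.le_succ k)) hν
    (fun K hK => hle K (hK.trans hrN)) (hμ_sum.trans (heq.trans hν_sum.symm))

/-- `capMass λ j = (λ₀, …, λ_{j-1}, 1 - (λ₀ + ⋯ + λ_{j-1}), 0, 0, …)`; for `j = m' - 1` this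
is the probability vector whose entropy is `F(A(τ))`. -/
def capMass (lam : ℕ → ℝ) (j : ℕ) (k : ℕ) : ℝ :=
  if k < j then lam k else if k = j then 1 - ∑ i ∈ range j, lam i else 0

section capMass

variable {lam : ℕ → ℝ} {j : ℕ}

theorem sum_range_capMass_of_le {K : ℕ} (hK : K ≤ j) :
    ∑ k ∈ range K, capMass lam j k = ∑ k ∈ range K, lam k :=
  sum_congr rfl fun _ hk => if_pos ((mem_range.1 hk).trans_le hK)

theorem sum_range_comp_capMass {g : ℝ → ℝ} (hg : g 0 = 0) {N : ℕ} (hN : j < N) :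
    ∑ k ∈ range N, g (capMass lam j k) =
      ∑ k ∈ range j, g (lam k) + g (1 - ∑ i ∈ range j, lam i) := by
  obtain ⟨t, rfl⟩ := Nat.exists_eq_add_of_le hN
  rw [sum_range_add, sum_range_succ, sum_eq_zero (s := range t) fun k _ => ?_, add_zero]
  · congr 1
    · exact sum_congr rfl fun k hk => by rw [capMass, if_pos (mem_range.1 hk)]
    · simp [capMass]
  · rw [capMass, if_neg (by omega), if_neg (by omega), hg]

theorem sum_range_capMass_of_lt {K : ℕ} (hK : j < K) : ∑ k ∈ range K, capMass lam j k = 1 := by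
  simpa using sum_range_comp_capMass (g := id) rfl hK

theorem capMass_nonneg (hlam : ∀ k, 0 ≤ lam k) (hj : ∑ i ∈ range j, lam i ≤ 1) (k : ℕ) :
    0 ≤ capMass lam j k := by
  unfold capMass
  split_ifs
  exacts [hlam k, sub_nonneg.2 hj, le_rfl]

theorem capMass_le (hlam : Antitone lam) (hlam0 : ∀ k, 0 ≤ lam k)
    (hj : 1 ≤ ∑ i ∈ range (j + 1), lam i) (k : ℕ) : capMass lam j k ≤ lam 0 := by
  rw [sum_range_succ] at hj
  unfold capMass
  split_ifs with h
  · exact hlam (Nat.zero_le k)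
  · linarith [hlam (Nat.zero_le j)]
  · exact hlam0 0

end capMass

theorem sum_mul_log_le_log_of_le {ι : Type*} {s : Finset ι} {ν : ι → ℝ} {c : ℝ}
    (hν : ∀ k ∈ s, 0 ≤ ν k) (hc : ∀ k ∈ s, ν k ≤ c) (hsum : ∑ k ∈ s, ν k = 1) :
    ∑ k ∈ s, ν k * Real.log (ν k) ≤ Real.log c := by
  calc ∑ k ∈ s, ν k * Real.log (ν k) ≤ ∑ k ∈ s, ν k * Real.log c := by
        refine sum_le_sum fun k hk => ?_
        rcases (hν k hk).eq_or_lt with h | h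
        · simp [← h]
        · exact mul_le_mul_of_nonneg_left (Real.log_le_log h (hc k hk)) h.le
    _ = Real.log c := by rw [← sum_mul, hsum, one_mul]

theorem Fin.sum_univ_ite_lt_eq_sum_range {N : ℕ} {f : ℕ → ℝ} (hf : ∀ k, N ≤ k → f k = 0)
    (K : ℕ) : ∑ i : Fin N, (if (i : ℕ) < K then f i else 0) = ∑ k ∈ range K, f k := by
  rw [Fin.sum_univ_eq_sum_range (fun k => if k < K then f k else 0), ← sum_filter]
  calc ∑ k ∈ range N with k < K, f k = ∑ k ∈ range K with k < N, f k := by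
        congr 1; ext; simp only [mem_filter, mem_range]; omega
    _ = ∑ k ∈ range K, f k :=
        sum_filter_of_ne fun k _ hk => by_contra fun h => hk (hf k (not_lt.1 h))

theorem Fin.sum_univ_ite_val_lt_one {R : Type*} [AddCommMonoidWithOne R] {N K : ℕ} (hKN : K ≤ N) :
    ∑ i : Fin N, (if (i : ℕ) < K then (1 : R) else 0) = K := by
  rw [sum_boole, Fin.card_filter_val_lt, min_eq_right hKN]

theorem sum_mul_le_sum_ite_lt {N K : ℕ} {d q : Fin N → ℝ} (hd : Antitone d)
    (hq0 : ∀ i, 0 ≤ q i) (hq1 : ∀ i, q i ≤ 1) (hK : 0 < K) (hKN : K ≤ N) (hq : ∑ i, q i = K) :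
    ∑ i, q i * d i ≤ ∑ i : Fin N, if (i : ℕ) < K then d i else 0 := by
  set t := d ⟨K - 1, by omega⟩
  have hpt : ∀ i : Fin N, q i * d i ≤
      (if (i : ℕ) < K then d i else 0) + t * (q i - if (i : ℕ) < K then 1 else 0) := by
    intro i
    split_ifs with hi
    · nlinarith [hd (Fin.mk_le_mk.2 (by omega) : i ≤ ⟨K - 1, by omega⟩), hq1 i]
    · nlinarith [hd (Fin.mk_le_mk.2 (by omega) : (⟨K - 1, by omega⟩ : Fin N) ≤ i), hq0 i]
  calc ∑ i, q i * d i
      ≤ ∑ i : Fin N, ((if (i : ℕ) < K then d i else 0)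
          + t * (q i - if (i : ℕ) < K then 1 else 0)) := sum_le_sum fun i _ => hpt i
    _ = ∑ i : Fin N, if (i : ℕ) < K then d i else 0 := by
        rw [sum_add_distrib, ← mul_sum, sum_sub_distrib, hq, Fin.sum_univ_ite_val_lt_one hKN,
          sub_self, mul_zero, add_zero]

/-- `eigsDesc W` extended by zero, so that `sumTopEigs K W` becomes a sum over `range K`. -/
noncomputable def eigSeq {N : ℕ} (W : Matrix (Fin N) (Fin N) ℂ) (k : ℕ) : ℝ :=
  if h : k < N then eigsDesc W ⟨k, h⟩ else 0

section eigSeq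

variable {N : ℕ} {W : Matrix (Fin N) (Fin N) ℂ}

@[simp]
theorem eigSeq_fin (i : Fin N) : eigSeq W i = eigsDesc W i := by
  simp [eigSeq]

theorem eigSeq_of_le {k : ℕ} (hk : N ≤ k) : eigSeq W k = 0 := by
  simp [eigSeq, hk]

theorem sum_ite_lt_comp_eigsDesc {g : ℝ → ℝ} (hg : g 0 = 0) (K : ℕ) :
    ∑ i : Fin N, (if (i : ℕ) < K then g (eigsDesc W i) else 0) =
      ∑ k ∈ range K, g (eigSeq W k) := by
  simp only [← eigSeq_fin]
  exact Fin.sum_univ_ite_lt_eq_sum_range (f := fun k => g (eigSeq W k))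
    (fun k hk => by rw [eigSeq_of_le hk, hg]) K

theorem sumTopEigs_eq_sum_range (K : ℕ) : sumTopEigs K W = ∑ k ∈ range K, eigSeq W k :=
  sum_ite_lt_comp_eigsDesc (g := id) rfl K

theorem Matrix.IsHermitian.exists_perm_eigsDesc (hW : W.IsHermitian) :
    ∃ σ : Equiv.Perm (Fin N), eigsDesc W = hW.eigenvalues ∘ σ :=
  ⟨Fin.revPerm.trans (Tuple.sort hW.eigenvalues), by simp [eigsDesc, hW]; rfl⟩

theorem Matrix.IsHermitian.antitone_eigsDesc (hW : W.IsHermitian) : Antitone (eigsDesc W) := by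
  intro i j hij
  simp only [eigsDesc, dif_pos hW]
  exact Tuple.monotone_sort hW.eigenvalues (Fin.rev_le_rev.2 hij)

theorem Matrix.IsHermitian.sum_comp_eigsDesc (hW : W.IsHermitian) (g : ℝ → ℝ) :
    ∑ i, g (eigsDesc W i) = ∑ i, g (hW.eigenvalues i) := by
  obtain ⟨σ, hσ⟩ := hW.exists_perm_eigsDesc
  simpa [hσ] using Equiv.sum_comp σ (g ∘ hW.eigenvalues)

theorem Matrix.PosSemidef.eigSeq_nonneg (hW : W.PosSemidef) (k : ℕ) : 0 ≤ eigSeq W k := by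
  unfold eigSeq
  split_ifs
  · obtain ⟨σ, hσ⟩ := hW.1.exists_perm_eigsDesc
    simpa [hσ] using hW.eigenvalues_nonneg _
  · exact le_rfl

theorem Matrix.PosSemidef.antitone_eigSeq (hW : W.PosSemidef) : Antitone (eigSeq W) := by
  intro k l hkl
  by_cases hl : l < N
  · simp only [eigSeq, dif_pos hl, dif_pos (hkl.trans_lt hl)]
    exact hW.1.antitone_eigsDesc (Fin.mk_le_mk.2 hkl)
  · rw [eigSeq_of_le (not_lt.1 hl)]
    exact hW.eigSeq_nonneg k

theorem Matrix.IsHermitian.entropy_eq (hW : W.IsHermitian) :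
    entropy W = -∑ k ∈ range N, eigSeq W k * Real.log (eigSeq W k) := by
  rw [entropy, dif_pos hW,
    ← Fin.sum_univ_eq_sum_range (fun k => eigSeq W k * Real.log (eigSeq W k))]
  simp only [eigSeq_fin, hW.sum_comp_eigsDesc fun x => x * Real.log x]

theorem Matrix.IsHermitian.sum_range_eigSeq (hW : W.IsHermitian) :
    ∑ k ∈ range N, eigSeq W k = W.trace.re := by
  rw [← Fin.sum_univ_eq_sum_range (eigSeq W), hW.trace_eq_sum_eigenvalues]
  simpa using hW.sum_comp_eigsDesc fun x => x

theorem Matrix.IsHermitian.lambdaMax_eq (hW : W.IsHermitian) (hN : 0 < N) :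
    lambdaMax W = eigSeq W 0 := by
  obtain ⟨σ, hσ⟩ := hW.exists_perm_eigsDesc
  have : Nonempty (Fin N) := ⟨⟨0, hN⟩⟩
  rw [lambdaMax, dif_pos hW, ← σ.iSup_comp, eigSeq, dif_pos hN]
  change ⨆ i, (hW.eigenvalues ∘ σ) i = _
  rw [← hσ]
  exact le_antisymm (ciSup_le fun i => hW.antitone_eigsDesc (Fin.mk_le_mk.2 (Nat.zero_le i)))
    (le_ciSup (Finite.bddAbove_range _) _)

end eigSeq

section Trace

variable {n : Type*} [Fintype n] [DecidableEq n]

theorem Matrix.IsHermitian.re_trace_mul_eq {W : Matrix n n ℂ} (hW : W.IsHermitian)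
    (P : Matrix n n ℂ) :
    (P * W).trace.re = ∑ j, ((star (hW.eigenvectorUnitary : Matrix n n ℂ) * P *
      hW.eigenvectorUnitary) j j).re * hW.eigenvalues j := by
  conv_lhs => rw [hW.spectral_theorem, Unitary.conjStarAlgAut_apply]
  rw [← Matrix.mul_assoc, Matrix.trace_mul_comm, ← Matrix.mul_assoc, ← Matrix.mul_assoc,
    Matrix.trace, Complex.re_sum]
  simp [Matrix.mul_diagonal]

theorem Matrix.PosSemidef.re_trace_mul_nonneg {P Z : Matrix n n ℂ} (hP : P.PosSemidef)
    (hZ : Z.PosSemidef) : 0 ≤ (P * Z).trace.re := by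
  rw [Matrix.trace_mul_comm, hP.1.re_trace_mul_eq]
  refine sum_nonneg fun j _ => mul_nonneg ?_ (hP.eigenvalues_nonneg j)
  exact (Complex.nonneg_iff.1 ((hZ.conjTranspose_mul_mul_same _).diag_nonneg)).1

open scoped MatrixOrder in
theorem Matrix.PosSemidef.one_sub_of_trace_eq_one {X : Matrix n n ℂ} (hX : X.PosSemidef)
    (htr : X.trace = 1) : (1 - X).PosSemidef := by
  have hsum : ∑ i, hX.1.eigenvalues i = 1 := by
    simpa [htr] using (congrArg Complex.re hX.1.trace_eq_sum_eigenvalues).symm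
  rw [← Matrix.le_iff, CFC.le_one_iff (R := ℝ) X hX.1.isSelfAdjoint,
    hX.1.spectrum_real_eq_range_eigenvalues]
  rintro _ ⟨i, rfl⟩
  exact hsum ▸ single_le_sum (fun j _ => hX.eigenvalues_nonneg j) (mem_univ i)

end Trace

section KyFan

variable {N : ℕ} {W : Matrix (Fin N) (Fin N) ℂ}

theorem Matrix.IsHermitian.re_trace_mul_le_sumTopEigs (hW : W.IsHermitian)
    {P : Matrix (Fin N) (Fin N) ℂ} (hP : P.PosSemidef) (hP1 : (1 - P).PosSemidef) {K : ℕ}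
    (hK : 0 < K) (hKN : K ≤ N) (htr : P.trace = K) : (P * W).trace.re ≤ sumTopEigs K W := by
  obtain ⟨σ, hσ⟩ := hW.exists_perm_eigsDesc
  set V : Matrix (Fin N) (Fin N) ℂ := ↑hW.eigenvectorUnitary
  have hVV : star V * V = 1 := Unitary.coe_star_mul_self _
  have hVV' : V * star V = 1 := Unitary.coe_mul_star_self _
  set M := star V * P * V
  have hM : M.PosSemidef := hP.conjTranspose_mul_mul_same V
  have hM1 : (1 - M).PosSemidef := by
    have := hP1.conjTranspose_mul_mul_same V
    rwa [← Matrix.star_eq_conjTranspose, Matrix.mul_sub, Matrix.sub_mul, Matrix.mul_one,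
      hVV] at this
  have hMtr : ∑ j, (M j j).re = K := by
    have : M.trace = K := by rw [Matrix.trace_mul_cycle, hVV', Matrix.one_mul, htr]
    simpa [Matrix.trace] using congrArg Complex.re this
  have hev : ∀ i, hW.eigenvalues (σ i) = eigsDesc W i := fun i => by rw [hσ]; rfl
  rw [hW.re_trace_mul_eq, sumTopEigs, ← Equiv.sum_comp σ]
  simp only [hev]
  refine sum_mul_le_sum_ite_lt hW.antitone_eigsDesc (fun i => ?_) (fun i => ?_) hK hKN ?_
  · exact (Complex.nonneg_iff.1 hM.diag_nonneg).1
  · simpa using (Complex.nonneg_iff.1 (hM1.diag_nonneg (i := σ i))).1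
  · rwa [Equiv.sum_comp σ fun j => (M j j).re]

theorem Matrix.IsHermitian.exists_re_trace_mul_eq_sumTopEigs (hW : W.IsHermitian) {K : ℕ}
    (hKN : K ≤ N) : ∃ P : Matrix (Fin N) (Fin N) ℂ, P.PosSemidef ∧ (1 - P).PosSemidef ∧
      P.trace = K ∧ (P * W).trace.re = sumTopEigs K W := by
  obtain ⟨σ, hσ⟩ := hW.exists_perm_eigsDesc
  set V : Matrix (Fin N) (Fin N) ℂ := ↑hW.eigenvectorUnitary
  have hVV : star V * V = 1 := Unitary.coe_star_mul_self _
  have hVV' : V * star V = 1 := Unitary.coe_mul_star_self _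
  -- `P` is the spectral projection onto the eigenvectors of the `K` largest eigenvalues.
  set c : Fin N → ℝ := fun j => if (σ.symm j : ℕ) < K then 1 else 0
  have hc : ∀ i, c (σ i) = if (i : ℕ) < K then 1 else 0 := by simp [c]
  set D : Matrix (Fin N) (Fin N) ℂ := Matrix.diagonal fun j => (c j : ℂ)
  have hconj : ∀ d : Fin N → ℝ, 0 ≤ d →
      (V * Matrix.diagonal (fun j => (d j : ℂ)) * star V).PosSemidef := fun d hd =>
    (Matrix.posSemidef_diagonal_iff.2 fun j =>
      Complex.zero_le_real.2 (hd j)).mul_mul_conjTranspose_same V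
  refine ⟨V * D * star V, hconj c fun j => ?_, ?_, ?_, ?_⟩
  · simp only [c]; split_ifs <;> norm_num
  · have : 1 - V * D * star V = V * Matrix.diagonal (fun j => ((1 - c j : ℝ) : ℂ)) * star V := by
      rw [show Matrix.diagonal (fun j => ((1 - c j : ℝ) : ℂ)) = 1 - D by
          ext i j; by_cases h : i = j <;> simp [D, h],
        Matrix.mul_sub, Matrix.sub_mul, Matrix.mul_one, hVV']
    exact this ▸ hconj _ fun j => by simp only [c]; split_ifs <;> norm_num
  · rw [Matrix.trace_mul_cycle, hVV, Matrix.one_mul, Matrix.trace_diagonal, ← Equiv.sum_comp σ]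
    simp only [hc, apply_ite Complex.ofReal, Complex.ofReal_one, Complex.ofReal_zero]
    exact Fin.sum_univ_ite_val_lt_one (R := ℂ) hKN
  · have : star V * (V * D * star V) * V = D := by
      rw [← Matrix.mul_assoc, ← Matrix.mul_assoc, hVV, Matrix.one_mul, Matrix.mul_assoc, hVV,
        Matrix.mul_one]
    rw [hW.re_trace_mul_eq, this, sumTopEigs, ← Equiv.sum_comp σ]
    simp [D, hc, hσ]

theorem Matrix.IsHermitian.sumTopEigs_le {Y : Matrix (Fin N) (Fin N) ℂ} (hY : Y.IsHermitian)
    (hYW : (W - Y).PosSemidef) {K : ℕ} (hKN : K ≤ N) :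
    sumTopEigs K Y ≤ sumTopEigs K W := by
  rcases K.eq_zero_or_pos with rfl | hK
  · simp [sumTopEigs]
  obtain ⟨P, hP, hP1, htr, hPY⟩ := hY.exists_re_trace_mul_eq_sumTopEigs hKN
  have hW : W.IsHermitian := by simpa using hYW.1.add hY
  calc sumTopEigs K Y = (P * Y).trace.re := hPY.symm
    _ ≤ (P * Y).trace.re + (P * (W - Y)).trace.re :=
        le_add_of_nonneg_right (hP.re_trace_mul_nonneg hYW)
    _ = (P * W).trace.re := by
        rw [← Complex.add_re, ← Matrix.trace_add, ← Matrix.mul_add, add_sub_cancel]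
    _ ≤ sumTopEigs K W := hW.re_trace_mul_le_sumTopEigs hP hP1 hK hKN htr

end KyFan

section Kraus

variable {n m ι : Type*} [Fintype n] [Fintype m] [Fintype ι] {A : ι → Matrix m n ℂ}

theorem trace_sum_mul_mul_conjTranspose [DecidableEq n] (hA : ∑ i, (A i)ᴴ * A i = 1)
    (X : Matrix n n ℂ) :
    (∑ i, A i * X * (A i)ᴴ).trace = X.trace := by
  rw [Matrix.trace_sum]
  simp only [Matrix.trace_mul_cycle (A _)]
  rw [← Matrix.trace_sum, ← sum_mul, hA, Matrix.one_mul]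

theorem posSemidef_sum_mul_mul_conjTranspose {X : Matrix n n ℂ} (hX : X.PosSemidef) :
    (∑ i, A i * X * (A i)ᴴ).PosSemidef :=
  Matrix.posSemidef_sum _ fun i _ => hX.mul_mul_conjTranspose_same (A i)

end Kraus

theorem le_minEntropy {n m : Type*} [Fintype n] [DecidableEq n] [Fintype m] [DecidableEq m]
    [Nonempty n] {τ : Matrix n n ℂ → Matrix m m ℂ} {c : ℝ}
    (h : ∀ X : Matrix n n ℂ, X.PosSemidef → X.trace = 1 → c ≤ entropy (τ X)) :
    c ≤ minEntropy τ := by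
  obtain ⟨i⟩ := ‹Nonempty n›
  refine le_csInf ⟨_, Matrix.diagonal (Pi.single i 1), ?_, ?_, rfl⟩ ?_
  · exact Matrix.posSemidef_diagonal_iff.2 (Pi.single_nonneg.2 zero_le_one)
  · simp
  · rintro _ ⟨X, hX, hXtr, rfl⟩
    exact h X hX hXtr

theorem Matrix.PosSemidef.neg_sum_capMass_mul_log_le_entropy {N : ℕ}
    {Y W : Matrix (Fin N) (Fin N) ℂ} (hY : Y.PosSemidef) (hYtr : Y.trace = 1)
    (hYW : (W - Y).PosSemidef) {j : ℕ} (hjN : j < N) (hj : ∑ k ∈ range j, eigSeq W k ≤ 1) :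
    -∑ k ∈ range N, capMass (eigSeq W) j k * Real.log (capMass (eigSeq W) j k) ≤ entropy Y := by
  have hW : W.PosSemidef := by simpa using hYW.add hY
  have hYsum : ∑ k ∈ range N, eigSeq Y k = 1 := by
    rw [hY.1.sum_range_eigSeq, hYtr, Complex.one_re]
  rw [hY.1.entropy_eq, neg_le_neg_iff]
  refine sum_range_mul_log_le hY.antitone_eigSeq hY.eigSeq_nonneg
    (capMass_nonneg hW.eigSeq_nonneg hj) (fun K hK => ?_)
    (by rw [hYsum, sum_range_capMass_of_lt hjN])
  rcases le_or_gt K j with hKj | hjK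
  · rw [sum_range_capMass_of_le hKj, ← sumTopEigs_eq_sum_range, ← sumTopEigs_eq_sum_range]
    exact hY.1.sumTopEigs_le hYW hK
  · rw [sum_range_capMass_of_lt hjK, ← hYsum]
    exact sum_le_sum_of_subset_of_nonneg (range_subset_range.2 hK) fun k _ _ => hY.eigSeq_nonneg k

theorem stmt_13_general {n m l : ℕ} (A : Fin l → Matrix (Fin m) (Fin n) ℂ)
    (hA : ∑ i, (A i)ᴴ * A i = 1)
    (Aτ : Matrix (Fin m) (Fin m) ℂ) (hAτ : Aτ = ∑ i, A i * (A i)ᴴ)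
    (m' : ℕ) (hm'2 : 2 ≤ m')
    (hm'ge : 1 ≤ sumTopEigs m' Aτ)
    (hm'min : ∀ j : ℕ, 0 < j → j < m' → sumTopEigs j Aτ < 1)
    (η : ℝ) (hη : η = 1 - sumTopEigs (m' - 1) Aτ)
    (F : ℝ) (hF : F = -(η * Real.log η) -
      ∑ i : Fin m, if (i : ℕ) < m' - 1 then
        eigsDesc Aτ i * Real.log (eigsDesc Aτ i) else 0) :
    F ≤ minEntropy (fun X : Matrix (Fin n) (Fin n) ℂ => ∑ i, A i * X * (A i)ᴴ) ∧
      -Real.log (lambdaMax Aτ) ≤ F := by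
  obtain ⟨j, rfl⟩ : ∃ j, m' = j + 1 := ⟨m' - 1, by omega⟩
  have hAτ1 : Aτ = ∑ i, A i * (1 : Matrix (Fin n) (Fin n) ℂ) * (A i)ᴴ := by simp [hAτ]
  have hAτ_psd : Aτ.PosSemidef := hAτ1 ▸ posSemidef_sum_mul_mul_conjTranspose .one
  simp only [sumTopEigs_eq_sum_range, Nat.add_sub_cancel] at hm'ge hm'min hη hF
  have hlt : ∑ k ∈ range j, eigSeq Aτ k < 1 := hm'min j (by omega) (by omega)
  have hjm : j < m := by
    by_contra! h
    rw [sum_range_succ, eigSeq_of_le h, add_zero] at hm'ge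
    exact hlt.not_ge hm'ge
  have hF' : F = -∑ k ∈ range m, capMass (eigSeq Aτ) j k * Real.log (capMass (eigSeq Aτ) j k) := by
    rw [sum_range_comp_capMass (g := fun x => x * Real.log x) (by simp) hjm, hF, hη,
      sum_ite_lt_comp_eigsDesc (g := fun x => x * Real.log x) (by simp)]
    ring
  -- `minEntropy` is an `sInf`, so density matrices have to exist: `n = tr A(τ) ≥ 1`.
  have hn : 0 < n := by
    have h := sum_le_sum_of_subset_of_nonneg (range_subset_range.2 hjm)
      fun k _ _ => hAτ_psd.eigSeq_nonneg k
    have htr : Aτ.trace = n := by rw [hAτ1, trace_sum_mul_mul_conjTranspose hA, trace_one]; simp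
    rw [hAτ_psd.1.sum_range_eigSeq, htr, Complex.natCast_re] at h
    exact_mod_cast hm'ge.trans h
  have : Nonempty (Fin n) := ⟨⟨0, hn⟩⟩
  refine ⟨le_minEntropy fun X hX hXtr => hF' ▸ ?_, ?_⟩
  · refine (posSemidef_sum_mul_mul_conjTranspose hX).neg_sum_capMass_mul_log_le_entropy
      ((trace_sum_mul_mul_conjTranspose hA X).trans hXtr) ?_ hjm hlt.le
    rw [hAτ1, ← sum_sub_distrib]
    simpa [Matrix.mul_sub, Matrix.sub_mul] using
      posSemidef_sum_mul_mul_conjTranspose (A := A) (hX.one_sub_of_trace_eq_one hXtr)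
  · rw [hAτ_psd.1.lambdaMax_eq (by omega), hF', neg_le_neg_iff]
    exact sum_mul_log_le_log_of_le (fun k _ => capMass_nonneg hAτ_psd.eigSeq_nonneg hlt.le k)
      (fun k _ => capMass_le hAτ_psd.antitone_eigSeq hAτ_psd.eigSeq_nonneg hm'ge k)
      (sum_range_capMass_of_lt hjm)

/-- Let τ be a quantum channel with A(τ) = ∑ᵢ Aᵢ Aᵢ* and λ₁(A(τ)) < 1.
Let m' ≥ 2 be the smallest positive integer with λ₁(A(τ)) + ⋯ + λ_{m'}(A(τ)) ≥ 1 and set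
η = 1 - ∑_{i=1}^{m'-1} λᵢ(A(τ)). Then
H(τ) ≥ F(A(τ)) := -η log η - ∑_{i=1}^{m'-1} λᵢ(A(τ)) log λᵢ(A(τ)), and moreover
F(A(τ)) ≥ -log λ₁(A(τ)). -/
theorem stmt_13 {n m l : ℕ} (A : Fin l → Matrix (Fin m) (Fin n) ℂ)
    (hA : ∑ i, (A i)ᴴ * A i = 1)
    (Aτ : Matrix (Fin m) (Fin m) ℂ) (hAτ : Aτ = ∑ i, A i * (A i)ᴴ)
    (hlam : lambdaMax Aτ < 1)
    (m' : ℕ) (hm'2 : 2 ≤ m')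
    (hm'ge : 1 ≤ sumTopEigs m' Aτ)
    (hm'min : ∀ j : ℕ, 0 < j → j < m' → sumTopEigs j Aτ < 1)
    (η : ℝ) (hη : η = 1 - sumTopEigs (m' - 1) Aτ)
    (F : ℝ) (hF : F = -(η * Real.log η) -
      ∑ i : Fin m, if (i : ℕ) < m' - 1 then
        eigsDesc Aτ i * Real.log (eigsDesc Aτ i) else 0) :
    F ≤ minEntropy (fun X : Matrix (Fin n) (Fin n) ℂ => ∑ i, A i * X * (A i)ᴴ) ∧
      -Real.log (lambdaMax Aτ) ≤ F :=
  stmt_13_general A hA Aτ hAτ m' hm'2 hm'ge hm'min η hη F hF
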